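/- (Terëkhina's Theorem) Let f : [a,b] → ℝ be Riemann integrable on [a,b], and let G : [c,d] → ℝ be differentiable on [c,d] with Riemann integrable derivative G' on [c,d], with G([c,d]) ⊂ [a,b], G(c) = a and G(d) = b. Then the function t ↦ f(G(t)) G'(t) is Riemann integrable on [c,d] and ∫_a^b f(x) dx = ∫_c^d f(G(t)) G'(t) dt. -/

import Mathlib

noncomputable section

/-- A partition of `[a, b]` given by points `x 0 = a < x 1 < ⋯ < x n = b`. -/
def IsPartition (a b : ℝ) (n : ℕ) (x : ℕ → ℝ) : Prop :=
  x 0 = a ∧ x n = b ∧ ∀ i < n, x i < x (i + 1)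

/-- The lower Darboux sum of `f` associated to the partition points `x 0, …, x n`. -/
noncomputable def lowerSum (f : ℝ → ℝ) (n : ℕ) (x : ℕ → ℝ) : ℝ :=
  ∑ i ∈ Finset.range n, sInf (f '' Set.Icc (x i) (x (i + 1))) * (x (i + 1) - x i)

/-- The upper Darboux sum of `f` associated to the partition points `x 0, …, x n`. -/
noncomputable def upperSum (f : ℝ → ℝ) (n : ℕ) (x : ℕ → ℝ) : ℝ :=
  ∑ i ∈ Finset.range n, sSup (f '' Set.Icc (x i) (x (i + 1))) * (x (i + 1) - x i)

/-- The lower Darboux integral of `f` over `[a, b]`: the supremum of the lower sums. -/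
noncomputable def lowerDarboux (f : ℝ → ℝ) (a b : ℝ) : ℝ :=
  sSup {s : ℝ | ∃ n x, IsPartition a b n x ∧ s = lowerSum f n x}

/-- The upper Darboux integral of `f` over `[a, b]`: the infimum of the upper sums. -/
noncomputable def upperDarboux (f : ℝ → ℝ) (a b : ℝ) : ℝ :=
  sInf {s : ℝ | ∃ n x, IsPartition a b n x ∧ s = upperSum f n x}

/-- `f` is bounded on the set `s`. -/
def BoundedOn (f : ℝ → ℝ) (s : Set ℝ) : Prop := ∃ M : ℝ, ∀ x ∈ s, |f x| ≤ M

/-- `f` is Riemann integrable on `[a, b]`: it is bounded there and its lower and upper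
Darboux integrals coincide. -/
def RiemannIntegrableOn (f : ℝ → ℝ) (a b : ℝ) : Prop :=
  BoundedOn f (Set.Icc a b) ∧ lowerDarboux f a b = upperDarboux f a b

/-- The oriented Riemann integral `∫_u^v f`: for `u ≤ v` it is the (lower) Darboux integral
over `[u, v]` (equal to the upper one when `f` is Riemann integrable, and `0` when `u = v`),
and for `v < u` it is minus the integral over `[v, u]`. -/
noncomputable def riemannIntegral (f : ℝ → ℝ) (u v : ℝ) : ℝ :=
  if u ≤ v then lowerDarboux f u v else -lowerDarboux f v u

/-!
By Lebesgue's criterion, a bounded function on `[u, v]` is Riemann integrable exactly when it is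
continuous almost everywhere, and its Riemann integral is then its Lebesgue integral. The
product `f (G t) * G' t` is continuous at every `t` where `G'` is continuous and either
`G' t = 0` (boundedness of `f` suffices) or `f` is continuous at `G t`; since a differentiable
map pulls null sets back to null sets where its derivative does not vanish, this is almost every
`t`. The identity is the fundamental theorem of calculus for the Lipschitz function `Φ ∘ G`,
where `Φ` is a primitive of `f`.
-/

open MeasureTheory Set Filter Topology Asymptotics
open scoped NNReal

namespace IsPartition

variable {u v : ℝ} {n : ℕ} {x : ℕ → ℝ}

theorem le_of_le (h : IsPartition u v n x) {i j : ℕ} (hij : i ≤ j) (hj : j ≤ n) :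
    x i ≤ x j := by
  induction j, hij using Nat.le_induction with
  | base => exact le_rfl
  | succ k _ ih => exact (ih (by omega)).trans (h.2.2 k (by omega)).le

theorem mem_Icc (h : IsPartition u v n x) {i : ℕ} (hi : i ≤ n) : x i ∈ Icc u v :=
  ⟨h.1 ▸ h.le_of_le (Nat.zero_le i) hi, h.2.1 ▸ h.le_of_le hi le_rfl⟩

theorem Icc_subset (h : IsPartition u v n x) {i : ℕ} (hi : i < n) :
    Icc (x i) (x (i + 1)) ⊆ Icc u v :=
  Icc_subset_Icc (h.mem_Icc hi.le).1 (h.mem_Icc hi).2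

theorem exists_mem_Ico (h : IsPartition u v n x) {t : ℝ} (ht : t ∈ Ico u v) :
    ∃ i < n, t ∈ Ico (x i) (x (i + 1)) := by
  classical
  have hex : ∃ j, t < x j := ⟨n, h.2.1 ▸ ht.2⟩
  have hpos : Nat.find hex ≠ 0 := fun h0 =>
    (h0 ▸ Nat.find_spec hex).not_ge (h.1 ▸ ht.1)
  have hle : Nat.find hex ≤ n := Nat.find_min' hex (h.2.1 ▸ ht.2)
  refine ⟨Nat.find hex - 1, by omega, not_lt.1 (Nat.find_min hex (by omega)), ?_⟩
  rw [Nat.sub_add_cancel (Nat.pos_of_ne_zero hpos)]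
  exact Nat.find_spec hex

theorem eq_of_mem_Ico (h : IsPartition u v n x) {i j : ℕ} (hi : i < n) (hj : j < n) {t : ℝ}
    (hti : t ∈ Ico (x i) (x (i + 1))) (htj : t ∈ Ico (x j) (x (j + 1))) : i = j := by
  rcases lt_trichotomy i j with hij | rfl | hji
  · exact absurd (htj.1.trans_lt hti.2) (not_lt.2 (h.le_of_le hij hj.le))
  · rfl
  · exact absurd (hti.1.trans_lt htj.2) (not_lt.2 (h.le_of_le hji hi.le))

end IsPartition

theorem isPartition_zero (u : ℝ) : IsPartition u u 0 fun _ => u :=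
  ⟨rfl, rfl, fun _ hi => absurd hi (Nat.not_lt_zero _)⟩

def uniformPartition (u v : ℝ) (n : ℕ) (i : ℕ) : ℝ := u + i * ((v - u) / n)

theorem uniformPartition_succ_sub (u v : ℝ) (n i : ℕ) :
    uniformPartition u v n (i + 1) - uniformPartition u v n i = (v - u) / n := by
  simp only [uniformPartition]; push_cast; ring

theorem isPartition_uniformPartition {u v : ℝ} (huv : u < v) {n : ℕ} (hn : n ≠ 0) :
    IsPartition u v n (uniformPartition u v n) := by
  refine ⟨by simp [uniformPartition], by simp [uniformPartition]; field_simp; ring, fun i _ => ?_⟩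
  have := uniformPartition_succ_sub u v n i
  have : 0 < (v - u) / n := div_pos (sub_pos.2 huv) (by positivity)
  linarith

theorem exists_isPartition {u v : ℝ} (huv : u ≤ v) : ∃ n x, IsPartition u v n x := by
  rcases huv.eq_or_lt with rfl | huv
  · exact ⟨0, _, isPartition_zero u⟩
  · exact ⟨1, _, isPartition_uniformPartition huv one_ne_zero⟩

def stepFn (n : ℕ) (x : ℕ → ℝ) (g : ℕ → ℝ) (t : ℝ) : ℝ :=
  ∑ i ∈ Finset.range n, (Ico (x i) (x (i + 1))).indicator (fun _ => g i) t

section StepFunction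

variable {u v : ℝ} {n : ℕ} {x : ℕ → ℝ} {g : ℕ → ℝ}

theorem measurable_stepFn : Measurable (stepFn n x g) :=
  Finset.measurable_sum _ fun _ _ => measurable_const.indicator measurableSet_Ico

theorem integrable_indicator_Ico_const (a b c : ℝ) : Integrable ((Ico a b).indicator fun _ => c) :=
  (integrable_indicator_iff measurableSet_Ico).2 (integrableOn_const measure_Ico_lt_top.ne)

theorem integrable_stepFn : Integrable (stepFn n x g) :=
  integrable_finsetSum _ fun _ _ => integrable_indicator_Ico_const _ _ _

theorem integral_stepFn (h : IsPartition u v n x) :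
    ∫ t, stepFn n x g t = ∑ i ∈ Finset.range n, g i * (x (i + 1) - x i) := by
  unfold stepFn
  rw [integral_finsetSum _ fun _ _ => integrable_indicator_Ico_const _ _ _]
  refine Finset.sum_congr rfl fun i hi => ?_
  rw [integral_indicator_const _ measurableSet_Ico, smul_eq_mul, mul_comm,
    Real.volume_real_Ico_of_le (h.2.2 i (Finset.mem_range.1 hi)).le]

theorem stepFn_of_mem_Ico (h : IsPartition u v n x) {i : ℕ} (hi : i < n) {t : ℝ}
    (ht : t ∈ Ico (x i) (x (i + 1))) : stepFn n x g t = g i := by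
  rw [stepFn, Finset.sum_eq_single_of_mem i (Finset.mem_range.2 hi), indicator_of_mem ht]
  intro j hj hji
  exact indicator_of_notMem (fun htj => hji (h.eq_of_mem_Ico (Finset.mem_range.1 hj) hi htj ht)) _

theorem stepFn_of_notMem (h : IsPartition u v n x) {t : ℝ} (ht : t ∉ Ico u v) :
    stepFn n x g t = 0 := by
  refine Finset.sum_eq_zero fun i hi => indicator_of_notMem (fun hti => ht ?_) _
  have hi := Finset.mem_range.1 hi
  exact ⟨(h.mem_Icc hi.le).1.trans hti.1, hti.2.trans_le (h.mem_Icc hi).2⟩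

theorem stepFn_eventuallyEq (h : IsPartition u v n x) {t : ℝ} (ht : t ∈ Ioo u v)
    (hx : ∀ i, x i ≠ t) : stepFn n x g =ᶠ[𝓝 t] fun _ => stepFn n x g t := by
  obtain ⟨i, hi, hti⟩ := h.exists_mem_Ico (Ioo_subset_Ico_self ht)
  filter_upwards [Ioo_mem_nhds ((hti.1.lt_of_ne (hx i))) hti.2] with s hs
  rw [stepFn_of_mem_Ico h hi (Ioo_subset_Ico_self hs), stepFn_of_mem_Ico h hi hti]

end StepFunction

theorem csInf_mem_Icc_of_subset {s : Set ℝ} (hs : s.Nonempty) {a b : ℝ} (hsub : s ⊆ Icc a b) :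
    sInf s ∈ Icc a b :=
  closure_minimal hsub isClosed_Icc (csInf_mem_closure hs (bddBelow_Icc.mono hsub))

theorem csSup_mem_Icc_of_subset {s : Set ℝ} (hs : s.Nonempty) {a b : ℝ} (hsub : s ⊆ Icc a b) :
    sSup s ∈ Icc a b :=
  closure_minimal hsub isClosed_Icc (csSup_mem_closure hs (bddAbove_Icc.mono hsub))

section Darboux

variable {φ : ℝ → ℝ} {u v : ℝ} {n m : ℕ} {x y : ℕ → ℝ}

theorem BoundedOn.bddBelow_image {s t : Set ℝ} (hφ : BoundedOn φ s) (hts : t ⊆ s) :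
    BddBelow (φ '' t) := by
  obtain ⟨M, hM⟩ := hφ
  exact ⟨-M, forall_mem_image.2 fun r hr => (abs_le.1 (hM r (hts hr))).1⟩

theorem BoundedOn.bddAbove_image {s t : Set ℝ} (hφ : BoundedOn φ s) (hts : t ⊆ s) :
    BddAbove (φ '' t) := by
  obtain ⟨M, hM⟩ := hφ
  exact ⟨M, forall_mem_image.2 fun r hr => (abs_le.1 (hM r (hts hr))).2⟩

def lowerStep (φ : ℝ → ℝ) (n : ℕ) (x : ℕ → ℝ) : ℝ → ℝ :=
  stepFn n x fun i => sInf (φ '' Icc (x i) (x (i + 1)))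

def upperStep (φ : ℝ → ℝ) (n : ℕ) (x : ℕ → ℝ) : ℝ → ℝ :=
  stepFn n x fun i => sSup (φ '' Icc (x i) (x (i + 1)))

theorem measurable_lowerStep : Measurable (lowerStep φ n x) := measurable_stepFn

theorem measurable_upperStep : Measurable (upperStep φ n x) := measurable_stepFn

theorem integrable_lowerStep : Integrable (lowerStep φ n x) := integrable_stepFn

theorem integrable_upperStep : Integrable (upperStep φ n x) := integrable_stepFn

theorem integral_lowerStep (h : IsPartition u v n x) :
    ∫ t, lowerStep φ n x t = lowerSum φ n x :=
  integral_stepFn h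

theorem integral_upperStep (h : IsPartition u v n x) :
    ∫ t, upperStep φ n x t = upperSum φ n x :=
  integral_stepFn h

theorem lowerStep_le (h : IsPartition u v n x) (hφ : BoundedOn φ (Icc u v)) {t : ℝ}
    (ht : t ∈ Ico u v) : lowerStep φ n x t ≤ φ t := by
  obtain ⟨i, hi, hti⟩ := h.exists_mem_Ico ht
  rw [lowerStep, stepFn_of_mem_Ico h hi hti]
  exact csInf_le (hφ.bddBelow_image (h.Icc_subset hi))
    (mem_image_of_mem φ (Ico_subset_Icc_self hti))

theorem le_upperStep (h : IsPartition u v n x) (hφ : BoundedOn φ (Icc u v)) {t : ℝ}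
    (ht : t ∈ Ico u v) : φ t ≤ upperStep φ n x t := by
  obtain ⟨i, hi, hti⟩ := h.exists_mem_Ico ht
  rw [upperStep, stepFn_of_mem_Ico h hi hti]
  exact le_csSup (hφ.bddAbove_image (h.Icc_subset hi))
    (mem_image_of_mem φ (Ico_subset_Icc_self hti))

theorem lowerStep_mem_Icc (h : IsPartition u v n x) {i : ℕ} (hi : i < n) {t : ℝ}
    (ht : t ∈ Ico (x i) (x (i + 1))) {a b : ℝ} (hφ : MapsTo φ (Icc (x i) (x (i + 1))) (Icc a b)) :
    lowerStep φ n x t ∈ Icc a b := by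
  rw [lowerStep, stepFn_of_mem_Ico h hi ht]
  exact csInf_mem_Icc_of_subset ((nonempty_Icc.2 (h.2.2 i hi).le).image φ) hφ.image_subset

theorem upperStep_mem_Icc (h : IsPartition u v n x) {i : ℕ} (hi : i < n) {t : ℝ}
    (ht : t ∈ Ico (x i) (x (i + 1))) {a b : ℝ} (hφ : MapsTo φ (Icc (x i) (x (i + 1))) (Icc a b)) :
    upperStep φ n x t ∈ Icc a b := by
  rw [upperStep, stepFn_of_mem_Ico h hi ht]
  exact csSup_mem_Icc_of_subset ((nonempty_Icc.2 (h.2.2 i hi).le).image φ) hφ.image_subset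

theorem abs_lowerStep_le_indicator (h : IsPartition u v n x) {M : ℝ}
    (hM : ∀ s ∈ Icc u v, |φ s| ≤ M) (t : ℝ) :
    |lowerStep φ n x t| ≤ (Ico u v).indicator (fun _ => M) t := by
  by_cases ht : t ∈ Ico u v
  · obtain ⟨i, hi, hti⟩ := h.exists_mem_Ico ht
    rw [indicator_of_mem ht]
    exact abs_le.2 (lowerStep_mem_Icc h hi hti fun s hs => abs_le.1 (hM s (h.Icc_subset hi hs)))
  · rw [lowerStep, stepFn_of_notMem h ht, indicator_of_notMem ht, abs_zero]

theorem abs_upperStep_le_indicator (h : IsPartition u v n x) {M : ℝ}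
    (hM : ∀ s ∈ Icc u v, |φ s| ≤ M) (t : ℝ) :
    |upperStep φ n x t| ≤ (Ico u v).indicator (fun _ => M) t := by
  by_cases ht : t ∈ Ico u v
  · obtain ⟨i, hi, hti⟩ := h.exists_mem_Ico ht
    rw [indicator_of_mem ht]
    exact abs_le.2 (upperStep_mem_Icc h hi hti fun s hs => abs_le.1 (hM s (h.Icc_subset hi hs)))
  · rw [upperStep, stepFn_of_notMem h ht, indicator_of_notMem ht, abs_zero]

/-- Comparing integrals of step functions avoids common refinements. -/
theorem lowerSum_le_upperSum (hφ : BoundedOn φ (Icc u v)) (hP : IsPartition u v n x)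
    (hQ : IsPartition u v m y) : lowerSum φ n x ≤ upperSum φ m y := by
  rw [← integral_lowerStep hP, ← integral_upperStep hQ]
  refine integral_mono integrable_lowerStep integrable_upperStep fun t => ?_
  by_cases ht : t ∈ Ico u v
  · exact (lowerStep_le hP hφ ht).trans (le_upperStep hQ hφ ht)
  · rw [lowerStep, upperStep, stepFn_of_notMem hP ht, stepFn_of_notMem hQ ht]

theorem lowerSum_le_lowerDarboux (hφ : BoundedOn φ (Icc u v)) (h : IsPartition u v n x) :
    lowerSum φ n x ≤ lowerDarboux φ u v :=
  le_csSup ⟨upperSum φ n x, by rintro _ ⟨m, y, hQ, rfl⟩; exact lowerSum_le_upperSum hφ hQ h⟩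
    ⟨n, x, h, rfl⟩

theorem upperDarboux_le_upperSum (hφ : BoundedOn φ (Icc u v)) (h : IsPartition u v n x) :
    upperDarboux φ u v ≤ upperSum φ n x :=
  csInf_le ⟨lowerSum φ n x, by rintro _ ⟨m, y, hQ, rfl⟩; exact lowerSum_le_upperSum hφ h hQ⟩
    ⟨n, x, h, rfl⟩

theorem lowerDarboux_le_upperSum (hφ : BoundedOn φ (Icc u v)) (h : IsPartition u v n x) :
    lowerDarboux φ u v ≤ upperSum φ n x :=
  csSup_le ⟨_, n, x, h, rfl⟩ (by rintro _ ⟨m, y, hP, rfl⟩; exact lowerSum_le_upperSum hφ hP h)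

theorem lowerSum_le_upperDarboux (hφ : BoundedOn φ (Icc u v)) (h : IsPartition u v n x) :
    lowerSum φ n x ≤ upperDarboux φ u v :=
  le_csInf ⟨_, n, x, h, rfl⟩ (by rintro _ ⟨m, y, hQ, rfl⟩; exact lowerSum_le_upperSum hφ h hQ)

theorem RiemannIntegrableOn.exists_upperSum_sub_lowerSum_lt (hφ : RiemannIntegrableOn φ u v)
    (huv : u ≤ v) {ε : ℝ} (hε : 0 < ε) : ∃ n x m y, IsPartition u v n x ∧
      IsPartition u v m y ∧ upperSum φ m y - lowerSum φ n x < ε := by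
  obtain ⟨n₀, x₀, h₀⟩ := exists_isPartition huv
  obtain ⟨_, ⟨n, x, hP, rfl⟩, hL⟩ := exists_lt_of_lt_csSup
    (s := {s | ∃ n x, IsPartition u v n x ∧ s = lowerSum φ n x}) ⟨_, n₀, x₀, h₀, rfl⟩
    (sub_lt_self (lowerDarboux φ u v) (half_pos hε))
  obtain ⟨_, ⟨m, y, hQ, rfl⟩, hU⟩ := exists_lt_of_csInf_lt
    (s := {s | ∃ n x, IsPartition u v n x ∧ s = upperSum φ n x}) ⟨_, n₀, x₀, h₀, rfl⟩
    (lt_add_of_pos_right (upperDarboux φ u v) (half_pos hε))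
  refine ⟨n, x, m, y, hP, hQ, ?_⟩
  linarith [hφ.2]

end Darboux

theorem continuousAt_of_forall_eventually_mem_Icc {φ : ℝ → ℝ} {t : ℝ}
    (h : ∀ ε > 0, ∃ a b, b - a < ε ∧ ∀ᶠ s in 𝓝 t, φ s ∈ Icc a b) : ContinuousAt φ t := by
  refine Metric.continuousAt_iff'.2 fun ε hε => ?_
  obtain ⟨a, b, hab, hev⟩ := h ε hε
  have ht := hev.self_of_nhds
  filter_upwards [hev] with s hs
  rw [Real.dist_eq, abs_lt]
  constructor <;> linarith [hs.1, hs.2, ht.1, ht.2]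

section LebesgueCriterion

variable {φ : ℝ → ℝ} {u v : ℝ}

/-- One half of Lebesgue's criterion. The gaps between upper and lower step functions have
integrals tending to `0`, so their infimum vanishes almost everywhere; off the countably many
partition points, a small gap at `t` traps `φ` near `t` between two constants. -/
theorem RiemannIntegrableOn.ae_continuousAt (hφ : RiemannIntegrableOn φ u v) (huv : u ≤ v) :
    ∀ᵐ t, t ∈ Ioo u v → ContinuousAt φ t := by
  choose n x m y hP hQ hlt using fun k : ℕ =>
    hφ.exists_upperSum_sub_lowerSum_lt huv (Nat.one_div_pos_of_nat (n := k))
  set gap : ℕ → ℝ → ℝ := fun k t => upperStep φ (m k) (y k) t - lowerStep φ (n k) (x k) t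
  have gap_nonneg : ∀ k t, 0 ≤ gap k t := fun k t => by
    by_cases ht : t ∈ Ico u v
    · exact sub_nonneg.2 ((lowerStep_le (hP k) hφ.1 ht).trans (le_upperStep (hQ k) hφ.1 ht))
    · simp only [gap, upperStep, lowerStep, stepFn_of_notMem (hP k) ht,
        stepFn_of_notMem (hQ k) ht, sub_zero, le_refl]
  have lintegral_gap_le : ∀ k, ∫⁻ t, ENNReal.ofReal (gap k t) ≤ ENNReal.ofReal (1 / (k + 1)) := by
    intro k
    have hgap : ∫ t, gap k t = upperSum φ (m k) (y k) - lowerSum φ (n k) (x k) := by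
      rw [integral_sub integrable_upperStep integrable_lowerStep, integral_upperStep (hQ k),
        integral_lowerStep (hP k)]
    rw [← ofReal_integral_eq_lintegral_ofReal (f := gap k)
      (integrable_upperStep.sub integrable_lowerStep) (Eventually.of_forall (gap_nonneg k)), hgap]
    exact ENNReal.ofReal_le_ofReal (hlt k).le
  have hinf : ∀ᵐ t, ⨅ k, ENNReal.ofReal (gap k t) = 0 := by
    refine (lintegral_eq_zero_iff (Measurable.iInf fun k =>
      (measurable_upperStep.sub measurable_lowerStep).ennreal_ofReal)).1 (le_antisymm ?_ bot_le)
    have hlim : Tendsto (fun k : ℕ => ENNReal.ofReal (1 / (k + 1))) atTop (𝓝 0) := by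
      simpa using ENNReal.tendsto_ofReal tendsto_one_div_add_atTop_nhds_zero_nat
    exact ge_of_tendsto' hlim fun k => (lintegral_mono fun t => iInf_le _ k).trans
      (lintegral_gap_le k)
  have hpoints : ∀ᵐ t, t ∉ range (fun p : ℕ × ℕ => x p.1 p.2) ∪ range fun p : ℕ × ℕ => y p.1 p.2 :=
    measure_eq_zero_iff_ae_notMem.1 (((countable_range _).union (countable_range _)).measure_zero _)
  filter_upwards [hinf, hpoints] with t h0 htx ht
  refine continuousAt_of_forall_eventually_mem_Icc fun ε hε => ?_
  obtain ⟨k, hk⟩ : ∃ k, gap k t < ε := by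
    obtain ⟨k, hk⟩ := iInf_lt_iff.1 (h0 ▸ ENNReal.ofReal_pos.2 hε)
    exact ⟨k, (ENNReal.ofReal_lt_ofReal_iff hε).1 hk⟩
  refine ⟨lowerStep φ (n k) (x k) t, upperStep φ (m k) (y k) t, hk, ?_⟩
  filter_upwards [stepFn_eventuallyEq (hP k) ht fun i hi => htx (Or.inl ⟨(k, i), hi⟩),
    stepFn_eventuallyEq (hQ k) ht fun i hi => htx (Or.inr ⟨(k, i), hi⟩),
    Ioo_mem_nhds ht.1 ht.2] with s hℓ hυ hs
  exact ⟨hℓ.symm.trans_le (lowerStep_le (hP k) hφ.1 (Ioo_subset_Ico_self hs)),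
    (le_upperStep (hQ k) hφ.1 (Ioo_subset_Ico_self hs)).trans_eq hυ⟩

theorem tendsto_lowerStep_upperStep_uniformPartition (huv : u < v) {t : ℝ} (ht : t ∈ Ico u v)
    (hc : ContinuousAt φ t) :
    Tendsto (fun k : ℕ => lowerStep φ (k + 1) (uniformPartition u v (k + 1)) t) atTop (𝓝 (φ t)) ∧
      Tendsto (fun k : ℕ => upperStep φ (k + 1) (uniformPartition u v (k + 1)) t) atTop
        (𝓝 (φ t)) := by
  suffices h : ∀ ε > 0, ∀ᶠ k : ℕ in atTop,
      dist (lowerStep φ (k + 1) (uniformPartition u v (k + 1)) t) (φ t) < ε ∧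
        dist (upperStep φ (k + 1) (uniformPartition u v (k + 1)) t) (φ t) < ε from
    ⟨Metric.tendsto_nhds.2 fun ε hε => (h ε hε).mono fun _ => And.left,
      Metric.tendsto_nhds.2 fun ε hε => (h ε hε).mono fun _ => And.right⟩
  intro ε hε
  obtain ⟨δ, hδ, hφδ⟩ := Metric.continuousAt_iff.1 hc (ε / 2) (half_pos hε)
  have hmesh : ∀ᶠ k : ℕ in atTop, (v - u) / ((k + 1 : ℕ) : ℝ) < δ :=
    ((tendsto_const_div_atTop_nhds_zero_nat (v - u)).comp (tendsto_add_atTop_nat 1)).eventually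
      (gt_mem_nhds hδ)
  filter_upwards [hmesh] with k hk
  have hP := isPartition_uniformPartition huv k.succ_ne_zero
  obtain ⟨i, hi, hti⟩ := hP.exists_mem_Ico ht
  have hcell : MapsTo φ
      (Icc (uniformPartition u v (k + 1) i) (uniformPartition u v (k + 1) (i + 1)))
      (Icc (φ t - ε / 2) (φ t + ε / 2)) := fun s hs => by
    have hwidth := uniformPartition_succ_sub u v (k + 1) i
    have hst := (hφδ (show dist s t < δ by
      rw [Real.dist_eq, abs_lt]; constructor <;> linarith [hs.1, hs.2, hti.1, hti.2])).le
    rw [Real.dist_eq, abs_le] at hst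
    constructor <;> linarith [hst.1, hst.2]
  have hdist : ∀ r ∈ Icc (φ t - ε / 2) (φ t + ε / 2), dist r (φ t) < ε := fun r hr => by
    rw [Real.dist_eq, abs_lt]; constructor <;> linarith [hr.1, hr.2]
  exact ⟨hdist _ (lowerStep_mem_Icc hP hi hti hcell), hdist _ (upperStep_mem_Icc hP hi hti hcell)⟩

theorem ae_tendsto_lowerStep_upperStep_uniformPartition (huv : u < v)
    (hc : ∀ᵐ t, t ∈ Ioo u v → ContinuousAt φ t) :
    ∀ᵐ t, Tendsto (fun k : ℕ => lowerStep φ (k + 1) (uniformPartition u v (k + 1)) t) atTop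
        (𝓝 ((Ico u v).indicator φ t)) ∧
      Tendsto (fun k : ℕ => upperStep φ (k + 1) (uniformPartition u v (k + 1)) t) atTop
        (𝓝 ((Ico u v).indicator φ t)) := by
  filter_upwards [hc, measure_eq_zero_iff_ae_notMem.1 (measure_singleton u)] with t htc htu
  by_cases ht : t ∈ Ico u v
  · have ht' : t ∈ Ioo u v := ⟨ht.1.lt_of_ne (Ne.symm htu), ht.2⟩
    simpa only [indicator_of_mem ht] using
      tendsto_lowerStep_upperStep_uniformPartition huv ht (htc ht')
  · have hP k := isPartition_uniformPartition huv (Nat.succ_ne_zero k)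
    simp only [indicator_of_notMem ht, lowerStep, upperStep, stepFn_of_notMem (hP _) ht,
      tendsto_const_nhds, and_self]

theorem lowerDarboux_self (hφ : BoundedOn φ (Icc u u)) : lowerDarboux φ u u = 0 := by
  have h0 : lowerSum φ 0 (fun _ => u) = 0 := Finset.sum_range_zero _
  have h0' : upperSum φ 0 (fun _ => u) = 0 := Finset.sum_range_zero _
  exact le_antisymm (h0' ▸ lowerDarboux_le_upperSum hφ (isPartition_zero u))
    (h0 ▸ lowerSum_le_lowerDarboux hφ (isPartition_zero u))

theorem upperDarboux_self (hφ : BoundedOn φ (Icc u u)) : upperDarboux φ u u = 0 := by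
  have h0 : lowerSum φ 0 (fun _ => u) = 0 := Finset.sum_range_zero _
  have h0' : upperSum φ 0 (fun _ => u) = 0 := Finset.sum_range_zero _
  exact le_antisymm (h0' ▸ upperDarboux_le_upperSum hφ (isPartition_zero u))
    (h0 ▸ lowerSum_le_upperDarboux hφ (isPartition_zero u))

/-- The other half of Lebesgue's criterion, with the value of the integral: on uniform
partitions the lower and upper step functions converge to `φ` at its points of continuity, so
by dominated convergence the lower and upper sums squeeze both Darboux integrals onto the
Lebesgue integral. -/
theorem integrableOn_and_darboux_eq_setIntegral_of_ae_continuousAt (huv : u ≤ v)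
    (hφ : BoundedOn φ (Icc u v)) (hc : ∀ᵐ t, t ∈ Ioo u v → ContinuousAt φ t) :
    IntegrableOn φ (Icc u v) ∧ lowerDarboux φ u v = ∫ t in Icc u v, φ t ∧
      upperDarboux φ u v = ∫ t in Icc u v, φ t := by
  rcases huv.eq_or_lt with rfl | huv
  · simp [lowerDarboux_self hφ, upperDarboux_self hφ]
  obtain ⟨M, hM⟩ := hφ
  have hP k := isPartition_uniformPartition huv (Nat.succ_ne_zero k)
  set ψ := (Ico u v).indicator φ
  have hlim := ae_tendsto_lowerStep_upperStep_uniformPartition huv hc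
  have hbound := integrable_indicator_Ico_const u v M
  have hψ : Integrable ψ := by
    refine hbound.mono' (aestronglyMeasurable_of_tendsto_ae atTop
      (fun _ => measurable_lowerStep.aestronglyMeasurable) (hlim.mono fun _ h => h.1))
      (Eventually.of_forall fun t => ?_)
    by_cases ht : t ∈ Ico u v
    · simpa only [ψ, indicator_of_mem ht, Real.norm_eq_abs] using hM t (Ico_subset_Icc_self ht)
    · simp only [ψ, indicator_of_notMem ht, norm_zero, le_refl]
  have hL : Tendsto (fun k : ℕ => lowerSum φ (k + 1) (uniformPartition u v (k + 1))) atTop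
      (𝓝 (∫ t, ψ t)) := by
    simpa only [integral_lowerStep (hP _)] using tendsto_integral_of_dominated_convergence _
      (fun _ => measurable_lowerStep.aestronglyMeasurable) hbound
      (fun k => Eventually.of_forall (abs_lowerStep_le_indicator (hP k) hM))
      (hlim.mono fun _ h => h.1)
  have hU : Tendsto (fun k : ℕ => upperSum φ (k + 1) (uniformPartition u v (k + 1))) atTop
      (𝓝 (∫ t, ψ t)) := by
    simpa only [integral_upperStep (hP _)] using tendsto_integral_of_dominated_convergence _
      (fun _ => measurable_upperStep.aestronglyMeasurable) hbound
      (fun k => Eventually.of_forall (abs_upperStep_le_indicator (hP k) hM))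
      (hlim.mono fun _ h => h.2)
  rw [integral_indicator measurableSet_Ico, ← integral_Icc_eq_integral_Ico] at hL hU
  refine ⟨?_, le_antisymm (ge_of_tendsto' hU fun k => lowerDarboux_le_upperSum ⟨M, hM⟩ (hP k))
      (le_of_tendsto' hL fun k => lowerSum_le_lowerDarboux ⟨M, hM⟩ (hP k)),
    le_antisymm (ge_of_tendsto' hU fun k => upperDarboux_le_upperSum ⟨M, hM⟩ (hP k))
      (le_of_tendsto' hL fun k => lowerSum_le_upperDarboux ⟨M, hM⟩ (hP k))⟩
  rw [integrableOn_Icc_iff_integrableOn_Ico]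
  exact (integrable_indicator_iff measurableSet_Ico).1 hψ

theorem riemannIntegrableOn_of_ae_continuousAt (huv : u ≤ v) (hφ : BoundedOn φ (Icc u v))
    (hc : ∀ᵐ t, t ∈ Ioo u v → ContinuousAt φ t) : RiemannIntegrableOn φ u v :=
  have h := integrableOn_and_darboux_eq_setIntegral_of_ae_continuousAt huv hφ hc
  ⟨hφ, h.2.1.trans h.2.2.symm⟩

theorem RiemannIntegrableOn.integrableOn (hφ : RiemannIntegrableOn φ u v) (huv : u ≤ v) :
    IntegrableOn φ (Icc u v) :=
  (integrableOn_and_darboux_eq_setIntegral_of_ae_continuousAt huv hφ.1 (hφ.ae_continuousAt huv)).1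

theorem RiemannIntegrableOn.riemannIntegral_eq_intervalIntegral (hφ : RiemannIntegrableOn φ u v)
    (huv : u ≤ v) : riemannIntegral φ u v = ∫ t in u..v, φ t := by
  rw [riemannIntegral, if_pos huv, (integrableOn_and_darboux_eq_setIntegral_of_ae_continuousAt huv
    hφ.1 (hφ.ae_continuousAt huv)).2.1, intervalIntegral.integral_of_le huv,
    integral_Icc_eq_integral_Ioc]

end LebesgueCriterion

theorem volume_eq_zero_of_abs_sub_le_mul {G : ℝ → ℝ} {T : Set ℝ} {K : ℝ≥0}
    (hK : ∀ s ∈ T, ∀ t ∈ T, |s - t| ≤ K * |G s - G t|) (hT : volume (G '' T) = 0) :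
    volume T = 0 := by
  classical
  set ρ := Function.invFunOn G T
  have hρ : ∀ y ∈ G '' T, ρ y ∈ T ∧ G (ρ y) = y := fun y hy =>
    ⟨Function.invFunOn_mem hy, Function.invFunOn_eq hy⟩
  have hsub : T ⊆ ρ '' (G '' T) := fun t ht => by
    obtain ⟨hρT, hGρ⟩ := hρ _ (mem_image_of_mem G ht)
    have := hK _ hρT t ht
    rw [hGρ, sub_self, abs_zero, mul_zero] at this
    exact ⟨G t, mem_image_of_mem G ht, sub_eq_zero.1 (abs_nonpos_iff.1 this)⟩
  have hρ_lip : LipschitzOnWith K ρ (G '' T) := LipschitzOnWith.of_dist_le_mul fun y₁ h₁ y₂ h₂ => by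
    have := hK _ (hρ y₁ h₁).1 _ (hρ y₂ h₂).1
    rwa [(hρ y₁ h₁).2, (hρ y₂ h₂).2] at this
  refine measure_mono_null hsub ?_
  simpa [hT] using hρ_lip.hausdorffMeasure_image_le (d := 1) zero_le_one

theorem HasDerivWithinAt.exists_abs_sub_le_mul {G : ℝ → ℝ} {g : ℝ} {s : Set ℝ} {t : ℝ}
    (hG : HasDerivWithinAt G g s t) (hg : g ≠ 0) :
    ∃ K : ℕ, ∃ δ > 0, ∀ r ∈ s, |r - t| < δ → |r - t| ≤ K * |G r - G t| := by
  obtain ⟨c, hc⟩ := (hG.isTheta_sub hg).isBigO_symm.bound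
  rw [prod_pure, eventually_map, eventually_nhdsWithin_iff, Metric.eventually_nhds_iff] at hc
  obtain ⟨δ, hδ, hδc⟩ := hc
  refine ⟨⌈c⌉₊, δ, hδ, fun r hr hrt => (hδc (by rwa [Real.dist_eq]) hr).trans ?_⟩
  exact mul_le_mul_of_nonneg_right (Nat.le_ceil c) (norm_nonneg _)

/-- Near a point where `G' ≠ 0` we have `|r - t| ≤ K * |G r - G t|`; the set is covered by
countably many pieces carrying such a bound uniformly, on each of which `G` has a Lipschitz
inverse, so that each piece is null. -/
theorem volume_preimage_null_inter_deriv_ne_zero {G G' : ℝ → ℝ} {s A : Set ℝ}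
    (hG : ∀ t ∈ s, HasDerivWithinAt G (G' t) s t) (hA : volume A = 0) :
    volume {t ∈ s | G t ∈ A ∧ G' t ≠ 0} = 0 := by
  set T : ℕ → ℕ → ℚ → Set ℝ := fun K n q => {t ∈ s | G t ∈ A ∧
    t ∈ Icc (q : ℝ) (q + 1 / (n + 1)) ∧ ∀ r ∈ s, |r - t| ≤ 1 / (n + 1) → |r - t| ≤ K * |G r - G t|}
  have hcover : {t ∈ s | G t ∈ A ∧ G' t ≠ 0} ⊆ ⋃ (K : ℕ) (n : ℕ) (q : ℚ), T K n q := by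
    rintro t ⟨hts, htA, hG't⟩
    obtain ⟨K, δ, hδ, hK⟩ := (hG t hts).exists_abs_sub_le_mul hG't
    obtain ⟨n, hn⟩ := exists_nat_one_div_lt hδ
    obtain ⟨q, hq₁, hq₂⟩ := exists_rat_btwn (sub_lt_self t (Nat.one_div_pos_of_nat (n := n)))
    simp only [mem_iUnion]
    exact ⟨K, n, q, hts, htA, ⟨hq₂.le, by linarith⟩, fun r hr hrt => hK r hr (hrt.trans_lt hn)⟩
  refine measure_mono_null hcover (measure_iUnion_null fun K => measure_iUnion_null fun n =>
    measure_iUnion_null fun q => volume_eq_zero_of_abs_sub_le_mul (K := K) ?_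
      (measure_mono_null (image_subset_iff.2 fun t ht => ht.2.1) hA))
  rintro r ⟨hrs, -, hrq, -⟩ t ⟨-, -, htq, ht⟩
  exact_mod_cast ht r hrs
    (abs_sub_le_iff.2 ⟨by linarith [hrq.2, htq.1], by linarith [hrq.1, htq.2]⟩)

theorem mem_Ioo_of_hasDerivAt_ne_zero {G : ℝ → ℝ} {g a b t : ℝ} (hG : HasDerivAt G g t)
    (hg : g ≠ 0) (hmaps : ∀ᶠ s in 𝓝 t, G s ∈ Icc a b) : G t ∈ Ioo a b := by
  have ht := hmaps.self_of_nhds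
  refine ⟨ht.1.lt_of_ne fun h => hg ?_, ht.2.lt_of_ne fun h => hg ?_⟩
  · exact IsLocalMin.hasDerivAt_eq_zero (hmaps.mono fun s hs => h ▸ hs.1) hG
  · exact IsLocalMax.hasDerivAt_eq_zero (hmaps.mono fun s hs => h ▸ hs.2) hG

theorem ae_continuousAt_comp_of_deriv_ne_zero {f G G' : ℝ → ℝ} {a b c d : ℝ}
    (hG : ∀ t ∈ Icc c d, HasDerivWithinAt G (G' t) (Icc c d) t)
    (hmaps : MapsTo G (Icc c d) (Icc a b)) (hf : ∀ᵐ x, x ∈ Ioo a b → ContinuousAt f x) :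
    ∀ᵐ t, t ∈ Ioo c d → G' t ≠ 0 → ContinuousAt f (G t) := by
  have hA : volume {x | x ∈ Ioo a b ∧ ¬ContinuousAt f x} = 0 := by
    simpa only [ae_iff, Classical.not_imp] using hf
  filter_upwards [measure_eq_zero_iff_ae_notMem.1 (volume_preimage_null_inter_deriv_ne_zero hG hA)]
    with t hnull ht h0
  have hGt := (hG t (Ioo_subset_Icc_self ht)).hasDerivAt (Icc_mem_nhds ht.1 ht.2)
  have hGab :=
    mem_Ioo_of_hasDerivAt_ne_zero hGt h0 (eventually_of_mem (Icc_mem_nhds ht.1 ht.2) hmaps)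
  by_contra hc
  exact hnull ⟨Ioo_subset_Icc_self ht, ⟨hGab, hc⟩, h0⟩

theorem lipschitzOnWith_intervalIntegral {E : Type*} [NormedAddCommGroup E] [NormedSpace ℝ E]
    {f : ℝ → E} {a b x₀ : ℝ} {C : ℝ≥0} (hf : IntegrableOn f (Icc a b))
    (hC : ∀ x ∈ Icc a b, ‖f x‖ ≤ C) (hx₀ : x₀ ∈ Icc a b) :
    LipschitzOnWith C (fun x => ∫ y in x₀..x, f y) (Icc a b) := by
  have hi : ∀ {z w}, z ∈ Icc a b → w ∈ Icc a b → IntervalIntegrable f volume z w :=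
    fun hz hw => (hf.mono_set (uIcc_subset_Icc hz hw)).intervalIntegrable
  refine LipschitzOnWith.of_dist_le_mul fun x hx y hy => ?_
  rw [dist_eq_norm, intervalIntegral.integral_interval_sub_left (hi hx₀ hx) (hi hx₀ hy),
    Real.dist_eq]
  exact intervalIntegral.norm_integral_le_of_norm_le_const fun z hz =>
    hC z (uIcc_subset_Icc hy hx (uIoc_subset_uIcc hz))

theorem hasDerivAt_comp_of_lipschitzOnWith {Φ G : ℝ → ℝ} {s : Set ℝ} {C : ℝ≥0} {t : ℝ}
    (hΦ : LipschitzOnWith C Φ s) (hG : HasDerivAt G 0 t) (hmaps : ∀ᶠ r in 𝓝 t, G r ∈ s) :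
    HasDerivAt (Φ ∘ G) 0 t := by
  rw [hasDerivAt_iff_isLittleO] at hG ⊢
  simp only [smul_zero, sub_zero, Function.comp_apply] at hG ⊢
  refine IsBigO.trans_isLittleO (IsBigO.of_bound C ?_) hG
  filter_upwards [hmaps] with r hr
  simpa only [← dist_eq_norm] using hΦ.dist_le_mul _ hr _ hmaps.self_of_nhds

/-- The primitive `Φ` of `f` is Lipschitz, so `Φ ∘ G` is absolutely continuous; it has
derivative `f (G t) * G' t` almost everywhere: by the chain rule where `G' t ≠ 0`, and because
`Φ ∘ G` moves by `O(G r - G t) = o(r - t)` where `G' t = 0`. -/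
theorem integral_comp_mul_deriv_of_ae_continuousAt {f G G' : ℝ → ℝ} {a b c d : ℝ} (hcd : c ≤ d)
    (hf : IntegrableOn f (Icc a b)) (hfb : BoundedOn f (Icc a b))
    (hG : ∀ t ∈ Icc c d, HasDerivWithinAt G (G' t) (Icc c d) t) (hG' : BoundedOn G' (Icc c d))
    (hmaps : MapsTo G (Icc c d) (Icc a b))
    (hfG : ∀ᵐ t, t ∈ Ioo c d → G' t ≠ 0 → ContinuousAt f (G t)) :
    ∫ t in c..d, f (G t) * G' t = ∫ x in G c..G d, f x := by
  obtain ⟨Mf, hMf⟩ := hfb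
  obtain ⟨Mg, hMg⟩ := hG'
  set Φ : ℝ → ℝ := fun x => ∫ y in G c..x, f y
  have hGc : G c ∈ Icc a b := hmaps (left_mem_Icc.2 hcd)
  have hΦ : LipschitzOnWith Mf.toNNReal Φ (Icc a b) := lipschitzOnWith_intervalIntegral hf
    (fun x hx => (hMf x hx).trans (Real.le_coe_toNNReal Mf)) hGc
  have hGlip : LipschitzOnWith Mg.toNNReal G (Icc c d) :=
    (convex_Icc c d).lipschitzOnWith_of_nnnorm_hasDerivWithin_le hG fun t ht => by
      rw [← NNReal.coe_le_coe, coe_nnnorm, Real.norm_eq_abs]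
      exact (hMg t ht).trans (Real.le_coe_toNNReal Mg)
  have hAC : AbsolutelyContinuousOnInterval (Φ ∘ G) c d := by
    refine LipschitzOnWith.absolutelyContinuousOnInterval (K := Mf.toNNReal * Mg.toNNReal) ?_
    rw [uIcc_of_le hcd]
    exact hΦ.comp hGlip hmaps
  have hderiv : ∀ᵐ t, t ∈ Ioo c d → HasDerivAt (Φ ∘ G) (f (G t) * G' t) t := by
    filter_upwards [hfG] with t hft ht
    have hGt := (hG t (Ioo_subset_Icc_self ht)).hasDerivAt (Icc_mem_nhds ht.1 ht.2)
    have hnear : ∀ᶠ r in 𝓝 t, G r ∈ Icc a b := eventually_of_mem (Icc_mem_nhds ht.1 ht.2) hmaps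
    by_cases h0 : G' t = 0
    · rw [h0, mul_zero]
      exact hasDerivAt_comp_of_lipschitzOnWith hΦ (h0 ▸ hGt) hnear
    · have hGt' := mem_Ioo_of_hasDerivAt_ne_zero hGt h0 hnear
      have hΦt : HasDerivAt Φ (f (G t)) (G t) := intervalIntegral.integral_hasDerivAt_right
        (hf.mono_set (uIcc_subset_Icc hGc (Ioo_subset_Icc_self hGt'))).intervalIntegrable
        ⟨Icc a b, Icc_mem_nhds hGt'.1 hGt'.2, hf.aestronglyMeasurable⟩ (hft ht h0)
      exact hΦt.comp t hGt
  calc ∫ t in c..d, f (G t) * G' t = ∫ t in c..d, deriv (Φ ∘ G) t := by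
        refine intervalIntegral.integral_congr_ae ?_
        filter_upwards [hderiv, measure_eq_zero_iff_ae_notMem.1 (measure_singleton d)]
          with t ht htd htcd
        rw [uIoc_of_le hcd] at htcd
        exact (ht ⟨htcd.1, htcd.2.lt_of_ne htd⟩).deriv.symm
    _ = Φ (G d) - Φ (G c) := hAC.integral_deriv_eq_sub
    _ = ∫ x in G c..G d, f x := by simp [Φ]

theorem BoundedOn.comp_mul {f G G' : ℝ → ℝ} {s t : Set ℝ} (hf : BoundedOn f t)
    (hG' : BoundedOn G' s) (hmaps : MapsTo G s t) : BoundedOn (fun x => f (G x) * G' x) s := by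
  obtain ⟨Mf, hMf⟩ := hf
  obtain ⟨Mg, hMg⟩ := hG'
  refine ⟨Mf * Mg, fun x hx => ?_⟩
  rw [abs_mul]
  exact mul_le_mul (hMf _ (hmaps hx)) (hMg x hx) (abs_nonneg _)
    ((abs_nonneg _).trans (hMf _ (hmaps hx)))

theorem continuousAt_mul_of_isBoundedUnder {φ ψ : ℝ → ℝ} {t : ℝ}
    (hφ : IsBoundedUnder (· ≤ ·) (𝓝 t) (norm ∘ φ)) (hψ : ContinuousAt ψ t)
    (hφψ : ψ t ≠ 0 → ContinuousAt φ t) : ContinuousAt (fun s => φ s * ψ s) t := by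
  by_cases h0 : ψ t = 0
  · rw [ContinuousAt, h0, mul_zero]
    exact isBoundedUnder_le_mul_tendsto_zero hφ (h0 ▸ hψ)
  · exact (hφψ h0).mul hψ

/-- **Terëkhina's theorem.** Let `f` be Riemann integrable on `[a, b]`, let `G` be
differentiable on `[c, d]` (one-sidedly at the endpoints) with Riemann integrable
derivative `G'`, `G([c, d]) ⊆ [a, b]`, `G c = a` and `G d = b`. Then `(f ∘ G) · G'` is
Riemann integrable on `[c, d]` and `∫_a^b f(x) dx = ∫_c^d f(G t) G'(t) dt`. -/
theorem terekhina (a b c d : ℝ) (hab : a ≤ b) (hcd : c ≤ d) (f G G' : ℝ → ℝ)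
    (hf : RiemannIntegrableOn f a b)
    (hG : ∀ t ∈ Set.Icc c d, HasDerivWithinAt G (G' t) (Set.Icc c d) t)
    (hG' : RiemannIntegrableOn G' c d)
    (hrange : G '' Set.Icc c d ⊆ Set.Icc a b)
    (hGc : G c = a) (hGd : G d = b) :
    RiemannIntegrableOn (fun t => f (G t) * G' t) c d ∧
      riemannIntegral f a b = riemannIntegral (fun t => f (G t) * G' t) c d := by
  have hmaps : MapsTo G (Icc c d) (Icc a b) := fun t ht => hrange (mem_image_of_mem G ht)
  have hfG := ae_continuousAt_comp_of_deriv_ne_zero hG hmaps (hf.ae_continuousAt hab)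
  obtain ⟨Mf, hMf⟩ := hf.1
  have hcont : ∀ᵐ t, t ∈ Ioo c d → ContinuousAt (fun t => f (G t) * G' t) t := by
    filter_upwards [hfG, hG'.ae_continuousAt hcd] with t hft hG't ht
    have hGt := (hG t (Ioo_subset_Icc_self ht)).hasDerivAt (Icc_mem_nhds ht.1 ht.2)
    refine continuousAt_mul_of_isBoundedUnder ?_ (hG't ht) fun h0 =>
      (hft ht h0).comp (f := G) hGt.continuousAt
    exact isBoundedUnder_of_eventually_le (a := Mf)
      (eventually_of_mem (Icc_mem_nhds ht.1 ht.2) fun s hs => hMf _ (hmaps hs))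
  have hR := riemannIntegrableOn_of_ae_continuousAt hcd (hf.1.comp_mul hG'.1 hmaps) hcont
  refine ⟨hR, ?_⟩
  rw [hf.riemannIntegral_eq_intervalIntegral hab, hR.riemannIntegral_eq_intervalIntegral hcd,
    ← hGc, ← hGd]
  exact (integral_comp_mul_deriv_of_ae_continuousAt hcd (hf.integrableOn hab) hf.1 hG hG'.1 hmaps
    hfG).symm
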